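/- Let μ, ν be Borel probability measures on ℝ with finite first moments and μ ≤_cd ν, define c(u) = sup_{k∈ℝ} (C_{μ_u}(k) − C_ν(k)) for u ∈ (0,1) with c(0) = 0, and set u* = sup{u ∈ (0,1) : c(u) = 0} (with sup ∅ = 0). Then c is strictly increasing on (u*,1): for all u, v with u* < u < v < 1, c(u) < c(v). -/

import Mathlib

open MeasureTheory Set Filter

noncomputable section

/-- `η ∈ 𝓜`: a finite Borel measure on ℝ with finite first moment. -/
def MemM (η : MeasureTheory.Measure ℝ) : Prop :=
  MeasureTheory.IsFiniteMeasure η ∧ MeasureTheory.Integrable (fun x : ℝ => x) η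

/-- Convex-decreasing order `≤_cd`. -/
def LeCD (η χ : MeasureTheory.Measure ℝ) : Prop :=
  ∀ f : ℝ → ℝ, ConvexOn ℝ Set.univ f → Antitone f →
    MeasureTheory.Integrable f η → MeasureTheory.Integrable f χ →
    ∫ x, f x ∂η ≤ ∫ x, f x ∂χ

/-- Positive convex-decreasing order `≤_pcd`. -/
def LePCD (η χ : MeasureTheory.Measure ℝ) : Prop :=
  ∀ f : ℝ → ℝ, (∀ x, 0 ≤ f x) → ConvexOn ℝ Set.univ f → Antitone f →
    MeasureTheory.Integrable f η → MeasureTheory.Integrable f χ →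
    ∫ x, f x ∂η ≤ ∫ x, f x ∂χ

/-- Positive convex order `≤_pc`. -/
def LePC (η χ : MeasureTheory.Measure ℝ) : Prop :=
  ∀ f : ℝ → ℝ, (∀ x, 0 ≤ f x) → ConvexOn ℝ Set.univ f →
    MeasureTheory.Integrable f η → MeasureTheory.Integrable f χ →
    ∫ x, f x ∂η ≤ ∫ x, f x ∂χ

/-- A supermartingale coupling of `η` and `χ`. -/
def IsSupermartingaleCoupling (η χ : MeasureTheory.Measure ℝ)
    (π : MeasureTheory.Measure (ℝ × ℝ)) : Prop :=
  MeasureTheory.IsProbabilityMeasure π ∧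
  π.map Prod.fst = η ∧ π.map Prod.snd = χ ∧
  MeasureTheory.Integrable (fun p : ℝ × ℝ => p.2) π ∧
  ∀ B : Set ℝ, MeasurableSet B →
    ∫ p in B ×ˢ (Set.univ : Set ℝ), (p : ℝ × ℝ).2 ∂π ≤ ∫ x in B, x ∂η

/-- The potential function `P_η(k) = ∫ (k-x)⁺ η(dx)`. -/
def Ppot (η : MeasureTheory.Measure ℝ) (k : ℝ) : ℝ := ∫ x, max (k - x) 0 ∂η

/-- The potential function `C_η(k) = ∫ (x-k)⁺ η(dx)`. -/
def Cpot (η : MeasureTheory.Measure ℝ) (k : ℝ) : ℝ := ∫ x, max (x - k) 0 ∂η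

/-- The left-continuous quantile function `G_η(u) = sup {k | η((-∞,k]) < u}`. -/
def quantile (η : MeasureTheory.Measure ℝ) (u : ℝ) : ℝ :=
  sSup {k : ℝ | (η (Set.Iic k)).toReal < u}

/-- The lift `μ_u = μ|_{(-∞,G(u))} + (u - μ((-∞,G(u)))) δ_{G(u)}`, with `μ_0 = 0`, `μ_1 = μ`. -/
def muU (μ : MeasureTheory.Measure ℝ) (u : ℝ) : MeasureTheory.Measure ℝ :=
  if u ≤ 0 then 0
  else if 1 ≤ u then μ
  else μ.restrict (Set.Iio (quantile μ u)) +
    (ENNReal.ofReal (u - (μ (Set.Iio (quantile μ u))).toReal)) •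
      MeasureTheory.Measure.dirac (quantile μ u)

/-- `S` is a shadow of `μ` in `ν`. -/
def IsShadow (μ ν S : MeasureTheory.Measure ℝ) : Prop :=
  MemM S ∧ LeCD μ S ∧ (∀ A : Set ℝ, MeasurableSet A → S A ≤ ν A) ∧
  ∀ η : MeasureTheory.Measure ℝ, MemM η → LeCD μ η →
    (∀ A : Set ℝ, MeasurableSet A → η A ≤ ν A) → LeCD S η

/-- `h` is the convex hull of `f`. -/
def IsConvexHullFn (f h : ℝ → ℝ) : Prop :=
  ConvexOn ℝ Set.univ h ∧ (∀ x, h x ≤ f x) ∧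
  ∀ g : ℝ → ℝ, ConvexOn ℝ Set.univ g → (∀ x, g x ≤ f x) → ∀ x, g x ≤ h x

/-- The class `𝒟(a,b)`. -/
def MemD (a b : ℝ) (f : ℝ → ℝ) : Prop :=
  (∀ x, 0 ≤ f x) ∧ Monotone f ∧ ConvexOn ℝ Set.univ f ∧
  Filter.Tendsto f Filter.atBot (nhds 0) ∧
  Filter.Tendsto (fun z => f z - (a * z - b)) Filter.atTop (nhds 0)

/-- The topological support of a measure. -/
def msupport (η : MeasureTheory.Measure ℝ) : Set ℝ :=
  {x : ℝ | ∀ U ∈ nhds x, η U ≠ 0}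

/-!
For `0 < u < 1` the measure `μ_u` lives on `(-∞, G(u)]`, so `C_{μ_u}(k) ≤ u (G(u) - k)⁺`; and
passing from `μ_u` to `μ_v` adds mass `v - u` at points `≥ G(u)`, so
`C_{μ_v}(k) ≥ C_{μ_u}(k) + (v - u) (G(u) - k)⁺`. Together these give `(1 + v - u) F_u ≤ F_v`
pointwise for `F_u = C_{μ_u} - C_ν`. Since `C_ν(k) ≥ ∫ x dν - k`, each `F_u` is bounded above,
so `c(u)` is a genuine supremum, and it is `≥ 0` because `C_ν → 0` at `+∞`. For `u > u*` it is
therefore positive, and a `k` with `F_u(k) > c(u) / (1 + v - u)` gives `c(v) ≥ F_v(k) > c(u)`.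
-/

open Topology ProbabilityTheory

section Quantile

variable {μ : Measure ℝ} {u v k : ℝ}

lemma nonempty_setOf_cdf_lt (hu : 0 < u) : {k | cdf μ k < u}.Nonempty :=
  ((tendsto_cdf_atBot μ).eventually_lt_const hu).exists

lemma bddAbove_setOf_cdf_lt (hu : u < 1) : BddAbove {k | cdf μ k < u} := by
  obtain ⟨K, hK⟩ := eventually_atTop.1 ((tendsto_cdf_atTop μ).eventually_const_lt hu)
  exact ⟨K, fun k hk => le_of_lt (not_le.1 fun hKk => (hK k hKk).not_gt hk)⟩

variable [IsProbabilityMeasure μ]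

lemma quantile_eq_sSup_cdf : quantile μ u = sSup {k | cdf μ k < u} := by
  simp only [quantile, cdf_eq_real, measureReal_def]

lemma cdf_lt_of_lt_quantile (hu : 0 < u) (hk : k < quantile μ u) : cdf μ k < u := by
  rw [quantile_eq_sSup_cdf] at hk
  obtain ⟨k', hk', hkk'⟩ := exists_lt_of_lt_csSup (nonempty_setOf_cdf_lt hu) hk
  exact (monotone_cdf μ hkk'.le).trans_lt hk'

lemma quantile_le_quantile (hu : 0 < u) (huv : u ≤ v) (hv : v < 1) :
    quantile μ u ≤ quantile μ v := by
  simp only [quantile_eq_sSup_cdf]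
  exact csSup_le_csSup (bddAbove_setOf_cdf_lt hv) (nonempty_setOf_cdf_lt hu)
    fun k hk => lt_of_lt_of_le hk huv

lemma measure_Iio_quantile_le (hu : 0 < u) : (μ (Iio (quantile μ u))).toReal ≤ u := by
  set g := quantile μ u
  have hleft : Function.leftLim (cdf μ) g ≤ u :=
    le_of_tendsto ((monotone_cdf μ).tendsto_leftLim g)
      (eventually_nhdsWithin_of_forall fun k hk => (cdf_lt_of_lt_quantile hu hk).le)
  rw [← measure_cdf (μ := μ), (cdf μ).measure_Iio (tendsto_cdf_atBot μ), sub_zero,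
    ENNReal.toReal_ofReal']
  exact max_le hleft hu.le

end Quantile

section CallPrice

lemma cpot_nonneg (η : Measure ℝ) (k : ℝ) : 0 ≤ Cpot η k :=
  integral_nonneg fun _ => le_max_right _ _

lemma integrable_max_sub_zero {η : Measure ℝ} [IsFiniteMeasure η]
    (h : Integrable (fun x : ℝ => x) η) (k : ℝ) : Integrable (fun x => max (x - k) 0) η := by
  simpa using (h.sub (integrable_const k)).pos_part

lemma integrableOn_Iio_max_sub_zero (η : Measure ℝ) [IsFiniteMeasure η] (a k : ℝ) :
    IntegrableOn (fun x => max (x - k) 0) (Iio a) η :=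
  Measure.integrableOn_of_bounded (M := max (a - k) 0) (measure_ne_top _ _) (by fun_prop)
    (ae_restrict_of_forall_mem measurableSet_Iio fun x hx => by
      rw [Real.norm_of_nonneg (le_max_right _ _)]
      exact max_le_max (by linarith [mem_Iio.1 hx]) le_rfl)

lemma sub_le_cpot {η : Measure ℝ} [IsProbabilityMeasure η]
    (h : Integrable (fun x : ℝ => x) η) (k : ℝ) : (∫ x, x ∂η) - k ≤ Cpot η k := by
  have hmean : ∫ x, (x - k) ∂η = (∫ x, x ∂η) - k := by
    simp [integral_sub h (integrable_const k)]
  rw [← hmean]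
  exact integral_mono (h.sub (integrable_const k)) (integrable_max_sub_zero h k)
    fun x => le_max_left _ _

lemma tendsto_cpot_atTop {η : Measure ℝ} [IsFiniteMeasure η]
    (h : Integrable (fun x : ℝ => x) η) : Tendsto (Cpot η) atTop (𝓝 0) := by
  rw [show (0 : ℝ) = ∫ _, (0 : ℝ) ∂η by simp]
  refine tendsto_integral_filter_of_dominated_convergence (fun x => |x|)
    (.of_forall fun k => by fun_prop) ?_ h.abs (ae_of_all _ fun x => ?_)
  · filter_upwards [eventually_ge_atTop 0] with k hk
    refine ae_of_all _ fun x => ?_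
    rw [Real.norm_of_nonneg (le_max_right _ _)]
    exact max_le (by linarith [le_abs_self x]) (abs_nonneg x)
  · refine tendsto_const_nhds.congr' ?_
    filter_upwards [eventually_ge_atTop x] with k hk
    exact (max_eq_right (by linarith)).symm

end CallPrice

section Lift

variable {μ : Measure ℝ} {u v : ℝ}

lemma muU_of_mem_Ioo (hu : 0 < u) (hu1 : u < 1) :
    muU μ u = μ.restrict (Iio (quantile μ u)) +
      ENNReal.ofReal (u - (μ (Iio (quantile μ u))).toReal) • Measure.dirac (quantile μ u) := by
  rw [muU, if_neg hu.not_ge, if_neg hu1.not_ge]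

variable [IsProbabilityMeasure μ]

lemma cpot_muU_eq (hu : 0 < u) (hu1 : u < 1) (k : ℝ) :
    Cpot (muU μ u) k = (∫ x in Iio (quantile μ u), max (x - k) 0 ∂μ)
      + (u - (μ (Iio (quantile μ u))).toReal) * max (quantile μ u - k) 0 := by
  rw [Cpot, muU_of_mem_Ioo hu hu1,
    integral_add_measure (integrableOn_Iio_max_sub_zero μ _ k)
      ((integrable_dirac (by simp)).smul_measure ENNReal.ofReal_ne_top),
    integral_smul_measure, integral_dirac, ENNReal.toReal_ofReal
      (sub_nonneg.2 (measure_Iio_quantile_le hu)), smul_eq_mul]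

lemma cpot_muU_le (hu : 0 < u) (hu1 : u < 1) (k : ℝ) :
    Cpot (muU μ u) k ≤ u * max (quantile μ u - k) 0 := by
  set g := quantile μ u
  have hbound : ∫ x in Iio g, max (x - k) 0 ∂μ ≤ max (g - k) 0 * (μ (Iio g)).toReal := by
    refine (le_abs_self _).trans ((Real.norm_eq_abs _).symm.trans_le
      (norm_setIntegral_le_of_norm_le_const (measure_lt_top _ _) fun x hx => ?_))
    rw [Real.norm_of_nonneg (le_max_right _ _)]
    exact max_le_max (by linarith [mem_Iio.1 hx]) le_rfl
  rw [cpot_muU_eq hu hu1]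
  linarith

lemma cpot_muU_add_le (hu : 0 < u) (huv : u ≤ v) (hv1 : v < 1) (k : ℝ) :
    Cpot (muU μ u) k + (v - u) * max (quantile μ u - k) 0 ≤ Cpot (muU μ v) k := by
  rw [cpot_muU_eq hu (huv.trans_lt hv1), cpot_muU_eq (hu.trans_le huv) hv1]
  set gu := quantile μ u
  set gv := quantile μ v
  have hg : gu ≤ gv := quantile_le_quantile hu huv hv1
  have hdisj : Disjoint (Iio gu) (Ico gu gv) :=
    disjoint_left.2 fun x hx hx' => (mem_Iio.1 hx).not_ge hx'.1
  have hsplit : ∫ x in Iio gv, max (x - k) 0 ∂μ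
      = (∫ x in Iio gu, max (x - k) 0 ∂μ) + ∫ x in Ico gu gv, max (x - k) 0 ∂μ := by
    rw [← Iio_union_Ico_eq_Iio hg]
    exact setIntegral_union hdisj measurableSet_Ico (integrableOn_Iio_max_sub_zero μ gu k)
      ((integrableOn_Iio_max_sub_zero μ gv k).mono_set Ico_subset_Iio_self)
  have hmass : (μ (Iio gv)).toReal = (μ (Iio gu)).toReal + (μ (Ico gu gv)).toReal := by
    rw [← Iio_union_Ico_eq_Iio hg, measure_union hdisj measurableSet_Ico,
      ENNReal.toReal_add (measure_ne_top μ _) (measure_ne_top μ _)]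
  have hIco : max (gu - k) 0 * (μ (Ico gu gv)).toReal ≤ ∫ x in Ico gu gv, max (x - k) 0 ∂μ :=
    setIntegral_ge_of_const_le_real measurableSet_Ico (measure_ne_top μ _)
      (fun x hx => max_le_max (by linarith [hx.1]) le_rfl)
      ((integrableOn_Iio_max_sub_zero μ gv k).mono_set Ico_subset_Iio_self)
  have hmono : max (gu - k) 0 ≤ max (gv - k) 0 := max_le_max (by linarith) le_rfl
  have hv : 0 ≤ v - (μ (Iio gv)).toReal :=
    sub_nonneg.2 (measure_Iio_quantile_le (hu.trans_le huv))
  rw [hmass] at hv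
  rw [hsplit, hmass]
  linarith [mul_le_mul_of_nonneg_left hmono hv]

end Lift

section Gap

variable {μ ν : Measure ℝ} [IsProbabilityMeasure μ] {u v : ℝ}

lemma one_add_mul_cpot_muU_sub_cpot_le (hu : 0 < u) (huv : u ≤ v) (hv1 : v < 1) (k : ℝ) :
    (1 + (v - u)) * (Cpot (muU μ u) k - Cpot ν k) ≤ Cpot (muU μ v) k - Cpot ν k := by
  have hadd := cpot_muU_add_le (μ := μ) hu huv hv1 k
  have hle := cpot_muU_le (μ := μ) hu (huv.trans_lt hv1) k
  have hgap : Cpot (muU μ u) k - Cpot ν k ≤ max (quantile μ u - k) 0 := by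
    nlinarith [cpot_nonneg ν k, le_max_right (quantile μ u - k) 0]
  nlinarith [mul_le_mul_of_nonneg_left hgap (sub_nonneg.2 huv)]

variable [IsProbabilityMeasure ν]

lemma cpot_muU_sub_cpot_le (hν : Integrable (fun x : ℝ => x) ν) (hu : 0 < u) (hu1 : u < 1)
    (k : ℝ) : Cpot (muU μ u) k - Cpot ν k ≤ max (quantile μ u - ∫ x, x ∂ν) 0 := by
  have hle := cpot_muU_le (μ := μ) hu hu1 k
  have hν_ge := sub_le_cpot hν k
  have hν_nonneg := cpot_nonneg ν k
  rcases le_total k (quantile μ u) with hk | hk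
  · rw [max_eq_left (sub_nonneg.2 hk)] at hle
    nlinarith [le_max_left (quantile μ u - ∫ x, x ∂ν) 0]
  · rw [max_eq_right (sub_nonpos.2 hk), mul_zero] at hle
    linarith [le_max_right (quantile μ u - ∫ x, x ∂ν) 0]

lemma bddAbove_range_cpot_muU_sub_cpot (hν : Integrable (fun x : ℝ => x) ν) (hu : 0 < u)
    (hu1 : u < 1) : BddAbove (range fun k => Cpot (muU μ u) k - Cpot ν k) :=
  ⟨_, forall_mem_range.2 (cpot_muU_sub_cpot_le hν hu hu1)⟩

lemma iSup_cpot_muU_sub_cpot_nonneg (hν : Integrable (fun x : ℝ => x) ν) (hu : 0 < u)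
    (hu1 : u < 1) : 0 ≤ ⨆ k, (Cpot (muU μ u) k - Cpot ν k) := by
  refine le_of_tendsto' (neg_zero (G := ℝ) ▸ (tendsto_cpot_atTop hν).neg) fun k => ?_
  exact (le_ciSup (bddAbove_range_cpot_muU_sub_cpot hν hu hu1) k).trans' (by
    linarith [cpot_nonneg (muU μ u) k])

end Gap

theorem c_strictly_increasing_after_uStar_general
    (μ ν : MeasureTheory.Measure ℝ)
    [MeasureTheory.IsProbabilityMeasure μ] [MeasureTheory.IsProbabilityMeasure ν]
    (hν : MeasureTheory.Integrable (fun x : ℝ => x) ν)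
    (c : ℝ → ℝ)
    (hcu : ∀ u ∈ Set.Ioo (0:ℝ) 1, c u = ⨆ k : ℝ, (Cpot (muU μ u) k - Cpot ν k))
    (uStar : ℝ) (huStar : uStar = sSup {u : ℝ | u ∈ Set.Ioo (0:ℝ) 1 ∧ c u = 0}) :
    ∀ u v : ℝ, uStar < u → u < v → v < 1 → c u < c v := by
  intro u v huS huv hv1
  have huStar_nonneg : 0 ≤ uStar := by
    rw [huStar]
    exact Real.sSup_nonneg fun w hw => hw.1.1.le
  have hu0 : 0 < u := huStar_nonneg.trans_lt huS
  have hu1 : u < 1 := huv.trans hv1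
  have hcu_ne : c u ≠ 0 := fun h =>
    huS.not_ge (huStar ▸ le_csSup ⟨1, fun w hw => hw.1.2.le⟩ ⟨⟨hu0, hu1⟩, h⟩)
  have hcu_pos : 0 < c u :=
    ((hcu u ⟨hu0, hu1⟩).symm ▸ iSup_cpot_muU_sub_cpot_nonneg hν hu0 hu1).lt_of_ne' hcu_ne
  have hscale : 0 < 1 + (v - u) := by linarith
  obtain ⟨k, hk⟩ : ∃ k, c u / (1 + (v - u)) < Cpot (muU μ u) k - Cpot ν k :=
    exists_lt_of_lt_ciSup (hcu u ⟨hu0, hu1⟩ ▸ div_lt_self hcu_pos (by linarith))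
  calc c u = (1 + (v - u)) * (c u / (1 + (v - u))) := by field_simp
    _ < (1 + (v - u)) * (Cpot (muU μ u) k - Cpot ν k) := by gcongr
    _ ≤ Cpot (muU μ v) k - Cpot ν k := one_add_mul_cpot_muU_sub_cpot_le hu0 huv.le hv1 k
    _ ≤ c v := by
      rw [hcu v ⟨hu0.trans huv, hv1⟩]
      exact le_ciSup (bddAbove_range_cpot_muU_sub_cpot hν (hu0.trans huv) hv1) k

/-- Corollary 4.5: `c` is strictly increasing on `(u*, 1)`. -/
theorem c_strictly_increasing_after_uStar
    (μ ν : MeasureTheory.Measure ℝ)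
    [MeasureTheory.IsProbabilityMeasure μ] [MeasureTheory.IsProbabilityMeasure ν]
    (hμ : MeasureTheory.Integrable (fun x : ℝ => x) μ)
    (hν : MeasureTheory.Integrable (fun x : ℝ => x) ν)
    (hcd : LeCD μ ν)
    (c : ℝ → ℝ)
    (hc0 : c 0 = 0)
    (hcu : ∀ u ∈ Set.Ioo (0:ℝ) 1, c u = ⨆ k : ℝ, (Cpot (muU μ u) k - Cpot ν k))
    (uStar : ℝ) (huStar : uStar = sSup {u : ℝ | u ∈ Set.Ioo (0:ℝ) 1 ∧ c u = 0}) :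
    ∀ u v : ℝ, uStar < u → u < v → v < 1 → c u < c v :=
  c_strictly_increasing_after_uStar_general μ ν hν c hcu uStar huStar
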